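/- Discrete ℓ² summation estimate over dyadic cubes (small part): Let F : ℝ² → [0,∞) be in L²(ℝ²) with ‖F‖_{L²} ≤ 1. Then Σ_{j∈ℤ} Σ_{Q∈𝒟_j} |Q|^{1/2} ‖F·χ_{{F ≤ 2^{−j}}}‖_{L³(Q)}³ ≲ 1. -/

import Mathlib

/-!
At each scale the cubes of `𝒟_j` tile the plane and `|Q|^{1/2} = 2^j`, so the left side is
`∫ ∑_j 2^j F³ 1_{F ≤ 2^{-j}}`. For fixed `ξ` the admissible scales satisfy `2^j ≤ 1/F(ξ)`, so
this inner sum is a geometric series dominated by twice its largest term, i.e. by `2 F(ξ)²`;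
integrating gives `2 ‖F‖₂² ≤ 2`.
-/

open MeasureTheory

noncomputable section

abbrev E2 := EuclideanSpace ℝ (Fin 2)

/-- The dyadic cube of side-length `2^j` in `ℝ²` indexed by `k ∈ ℤ²`. -/
def dyadicCube (j : ℤ) (k : Fin 2 → ℤ) : Set E2 :=
  {ξ | ∀ i, (2 : ℝ) ^ j * k i ≤ ξ i ∧ ξ i < (2 : ℝ) ^ j * (k i + 1)}

open scoped ENNReal

lemma mem_dyadicCube_iff {j : ℤ} {k : Fin 2 → ℤ} {ξ : E2} :
    ξ ∈ dyadicCube j k ↔ k = fun i => ⌊ξ i / 2 ^ j⌋ := by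
  have h2 : (0 : ℝ) < 2 ^ j := zpow_pos two_pos j
  simp only [dyadicCube, Set.mem_ofPred_eq, funext_iff, eq_comm (a := k _), Int.floor_eq_iff,
    le_div_iff₀ h2, div_lt_iff₀ h2, mul_comm (2 ^ j : ℝ)]

lemma measurableSet_dyadicCube (j : ℤ) (k : Fin 2 → ℤ) : MeasurableSet (dyadicCube j k) := by
  have hcoord : ∀ i, Measurable fun ξ : E2 => ξ i := fun i =>
    (measurable_pi_apply i).comp (PiLp.continuous_ofLp 2 _).measurable
  simp only [dyadicCube, Set.ofPred_forall]
  exact .iInter fun i =>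
    (measurableSet_le measurable_const (hcoord i)).inter (measurableSet_lt (hcoord i) measurable_const)

lemma iUnion_dyadicCube (j : ℤ) : ⋃ k, dyadicCube j k = Set.univ :=
  Set.eq_univ_of_forall fun _ => Set.mem_iUnion.2 ⟨_, mem_dyadicCube_iff.2 rfl⟩

lemma pairwise_disjoint_dyadicCube (j : ℤ) : Pairwise (Function.onFun Disjoint (dyadicCube j)) :=
  fun _ _ hkk' => Set.disjoint_left.2 fun _ hk hk' =>
    hkk' ((mem_dyadicCube_iff.1 hk).trans (mem_dyadicCube_iff.1 hk').symm)

lemma tsum_setLIntegral_dyadicCube (μ : Measure E2) (j : ℤ) (f : E2 → ℝ≥0∞) :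
    ∑' k, ∫⁻ ξ in dyadicCube j k, f ξ ∂μ = ∫⁻ ξ, f ξ ∂μ := by
  rw [← lintegral_iUnion (measurableSet_dyadicCube j) (pairwise_disjoint_dyadicCube j),
    iUnion_dyadicCube, Measure.restrict_univ]

lemma tsum_mul_setIntegral_dyadicCube_le {μ : Measure E2} {w : ℤ → ℝ} (hw : ∀ j, 0 ≤ w j) {g : ℤ → E2 → ℝ}
    (hg : ∀ j, Measurable (g j)) (hg0 : ∀ j ξ, 0 ≤ g j ξ) {C : ℝ≥0∞} (hC : C ≠ ∞)
    (h : ∫⁻ ξ, ∑' j, ENNReal.ofReal (w j * g j ξ) ∂μ ≤ C) :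
    ∑' q : ℤ × (Fin 2 → ℤ), w q.1 * ∫ ξ in dyadicCube q.1 q.2, g q.1 ξ ∂μ ≤ C.toReal := by
  set t : ℤ × (Fin 2 → ℤ) → ℝ≥0∞ := fun q =>
    ∫⁻ ξ in dyadicCube q.1 q.2, ENNReal.ofReal (w q.1 * g q.1 ξ) ∂μ
  have hterm : ∀ q, w q.1 * ∫ ξ in dyadicCube q.1 q.2, g q.1 ξ ∂μ = (t q).toReal := fun q => by
    rw [← integral_const_mul, integral_eq_lintegral_of_nonneg_ae
      (.of_forall fun ξ => mul_nonneg (hw _) (hg0 _ ξ))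
      ((hg q.1).const_mul _).aestronglyMeasurable]
  have htsum : ∑' q, t q = ∫⁻ ξ, ∑' j, ENNReal.ofReal (w j * g j ξ) ∂μ := by
    rw [ENNReal.tsum_prod (f := fun j k => t (j, k)),
      lintegral_tsum fun j => ((hg j).const_mul _).ennreal_ofReal.aemeasurable]
    exact tsum_congr fun j => tsum_setLIntegral_dyadicCube μ j fun ξ => ENNReal.ofReal (w j * g j ξ)
  have hfin : ∀ q, t q ≠ ∞ := fun q =>
    ne_top_of_le_ne_top hC ((ENNReal.le_tsum q).trans (htsum ▸ h))
  simp only [hterm, ← ENNReal.tsum_toReal_eq hfin]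
  exact ENNReal.toReal_mono hC (htsum ▸ h)

lemma tsum_ofReal_zpow_two_le {x : ℝ} (hx : 0 < x) :
    ∑' j : ℤ, ENNReal.ofReal (if (2 : ℝ) ^ j ≤ x then 2 ^ j else 0) ≤ ENNReal.ofReal (2 * x) := by
  set J := Int.log 2 x
  have hJ : (2 : ℝ) ^ J ≤ x := Int.zpow_log_le_self one_lt_two hx
  have hsupp : Function.support (fun j : ℤ => ENNReal.ofReal (if (2 : ℝ) ^ j ≤ x then 2 ^ j else 0))
      ⊆ Set.range (fun n : ℕ => J - n) := by
    intro j hj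
    have hjx : (2 : ℝ) ^ j ≤ x := by by_contra h; simp [h] at hj
    have : j ≤ J := (Int.zpow_le_iff_le_log one_lt_two hx).1 hjx
    exact ⟨(J - j).toNat, by simp only; omega⟩
  rw [← (show Function.Injective (fun n : ℕ => J - n) by intro m n h; simpa using h).tsum_eq hsupp]
  calc ∑' n : ℕ, ENNReal.ofReal (if (2 : ℝ) ^ (J - n) ≤ x then 2 ^ (J - n) else 0)
      ≤ ∑' n : ℕ, ENNReal.ofReal (2 ^ J * (1 / 2) ^ n) := by
        refine ENNReal.tsum_le_tsum fun n => ENNReal.ofReal_le_ofReal ?_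
        have : (2 : ℝ) ^ (J - n) = 2 ^ J * (1 / 2) ^ n := by
          rw [zpow_sub₀ two_ne_zero, zpow_natCast, one_div, inv_pow, div_eq_mul_inv]
        rw [this]
        split_ifs
        · rfl
        · positivity
    _ = ENNReal.ofReal (2 ^ J * 2) := by
        rw [← ENNReal.ofReal_tsum_of_nonneg (fun n => by positivity)
          (summable_geometric_two.mul_left _), tsum_mul_left, tsum_geometric_two]
    _ ≤ ENNReal.ofReal (2 * x) := ENNReal.ofReal_le_ofReal (by linarith)

lemma tsum_zpow_two_mul_truncation_cube_le {a : ℝ} (ha : 0 ≤ a) :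
    ∑' j : ℤ, ENNReal.ofReal ((2 : ℝ) ^ j * (if a ≤ (2 : ℝ) ^ (-j) then a else 0) ^ 3)
      ≤ 2 * ENNReal.ofReal (a ^ 2) := by
  rcases ha.eq_or_lt with rfl | ha
  · simp
  have hterm : ∀ j : ℤ, ENNReal.ofReal ((2 : ℝ) ^ j * (if a ≤ (2 : ℝ) ^ (-j) then a else 0) ^ 3)
      = ENNReal.ofReal (a ^ 3) * ENNReal.ofReal (if (2 : ℝ) ^ j ≤ a⁻¹ then 2 ^ j else 0) := by
    intro j
    rw [← ENNReal.ofReal_mul (by positivity), zpow_neg]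
    simp only [le_inv_comm₀ ha (zpow_pos two_pos j)]
    split_ifs <;> ring_nf
  calc ∑' j : ℤ, ENNReal.ofReal ((2 : ℝ) ^ j * (if a ≤ (2 : ℝ) ^ (-j) then a else 0) ^ 3)
      ≤ ENNReal.ofReal (a ^ 3) * ENNReal.ofReal (2 * a⁻¹) := by
        simp only [hterm, ENNReal.tsum_mul_left]
        exact mul_le_mul_right (tsum_ofReal_zpow_two_le (inv_pos.2 ha)) _
    _ = 2 * ENNReal.ofReal (a ^ 2) := by
        rw [← ENNReal.ofReal_mul (by positivity), ← ENNReal.ofReal_ofNat 2,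
          ← ENNReal.ofReal_mul zero_le_two]
        congr 1
        field_simp

lemma lintegral_ofReal_sq_le_one {α : Type*} [MeasurableSpace α] {μ : Measure α} {f : α → ℝ}
    (hf : eLpNorm f 2 μ ≤ 1) : ∫⁻ x, ENNReal.ofReal (f x ^ 2) ∂μ ≤ 1 := by
  have h := eLpNorm_nnreal_pow_eq_lintegral (f := f) (μ := μ) (p := 2) two_ne_zero
  have hsq : ∀ x, ENNReal.ofReal (f x ^ 2) = ‖f x‖ₑ ^ ((2 : NNReal) : ℝ) := by
    intro x
    rw [← sq_abs, ENNReal.ofReal_pow (abs_nonneg _), ← Real.enorm_eq_ofReal_abs]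
    norm_num
  simp only [hsq, ← h]
  exact ENNReal.rpow_le_one (by exact_mod_cast hf) (by positivity)

/-- Discrete `ℓ²` summation estimate over dyadic cubes (small part): for `F ≥ 0` with
`‖F‖_{L²(ℝ²)} ≤ 1`, `∑_j ∑_{Q ∈ 𝒟_j} |Q|^{1/2} ‖F·χ_{F ≤ 2^{-j}}‖_{L³(Q)}³ ≲ 1`. -/
theorem stmt6 :
    ∃ C > 0, ∀ F : E2 → ℝ, Measurable F → (∀ ξ, 0 ≤ F ξ) →
      eLpNorm F 2 volume ≤ 1 →
      (∑' q : ℤ × (Fin 2 → ℤ),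
        ((4 : ℝ) ^ q.1) ^ (1 / 2 : ℝ) *
          ∫ ξ in dyadicCube q.1 q.2,
            (if F ξ ≤ (2 : ℝ) ^ (-q.1) then F ξ else 0) ^ 3)
        ≤ C := by
  refine ⟨2, two_pos, fun F hF hF0 hF2 => ?_⟩
  have hsqrt : ∀ j : ℤ, ((4 : ℝ) ^ j) ^ (1 / 2 : ℝ) = 2 ^ j := fun j => by
    rw [show (4 : ℝ) ^ j = ((2 : ℝ) ^ j) ^ (2 : ℕ) by rw [sq, ← mul_zpow]; norm_num,
      ← Real.rpow_natCast, ← Real.rpow_mul (zpow_pos two_pos j).le]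
    norm_num
  have hbound : ∫⁻ ξ, ∑' j : ℤ,
      ENNReal.ofReal ((2 : ℝ) ^ j * (if F ξ ≤ (2 : ℝ) ^ (-j) then F ξ else 0) ^ 3) ≤ 2 :=
    calc _ ≤ ∫⁻ ξ, 2 * ENNReal.ofReal (F ξ ^ 2) :=
          lintegral_mono fun ξ => tsum_zpow_two_mul_truncation_cube_le (hF0 ξ)
      _ = 2 * ∫⁻ ξ, ENNReal.ofReal (F ξ ^ 2) := lintegral_const_mul' _ _ ENNReal.ofNat_ne_top
      _ ≤ 2 := by simpa using mul_le_mul_right (lintegral_ofReal_sq_le_one hF2) 2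
  simp only [hsqrt]
  exact (tsum_mul_setIntegral_dyadicCube_le (fun j => (zpow_pos two_pos j).le)
    (fun _ => (Measurable.ite (measurableSet_le hF measurable_const) hF measurable_const).pow_const 3)
    (fun _ _ => pow_nonneg (by split_ifs <;> simp [hF0]) 3) ENNReal.ofNat_ne_top hbound).trans_eq
    (ENNReal.toReal_ofNat 2)
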